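/- The Haar wavelet function is anti-periodic with respect to 2-adic units: for every ξ ∈ ℚ_2 with ‖ξ‖_2 = 1 and every x ∈ ℚ_2, ψ⁰(x + ξ) = −ψ⁰(x). -/

import Mathlib

/-!
A 2-adic unit is `1 + 2w` with `w ∈ ℤ_2`, since `1` is the only unit of the residue field `𝔽_2`.
Translation by `2w` moves both arguments of `φ` in `ψ⁰` by `w ∈ ℤ_2` and so leaves `ψ⁰` unchanged,
while translation by `1` swaps the two terms `φ(x/2)` and `φ(x/2 - 1/2)`, because `φ` is `1`-periodic.
-/

/-- The refinable function: the indicator of `ℤ_2` inside `ℚ_[2]`. -/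
noncomputable def phi2 : ℚ_[2] → ℂ :=
  Set.indicator {x : ℚ_[2] | ‖x‖ ≤ 1} 1

/-- The 2-adic Haar wavelet function `ψ⁰(x) = φ(x/2) − φ(x/2 − 1/2)`. -/
noncomputable def psi0 : ℚ_[2] → ℂ :=
  fun x => phi2 (x / 2) - phi2 (x / 2 - 1 / 2)

lemma IsUltrametricDist.norm_add_le_iff {E : Type*} [SeminormedAddCommGroup E]
    [IsUltrametricDist E] {y z : E} {r : ℝ} (hz : ‖z‖ ≤ r) : ‖y + z‖ ≤ r ↔ ‖y‖ ≤ r := by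
  refine ⟨fun h => ?_, fun h => (norm_add_le_max y z).trans (max_le h hz)⟩
  simpa using (norm_add_le_max (y + z) (-z)).trans (max_le h (by rwa [norm_neg]))

lemma PadicInt.two_dvd_sub_one_of_isUnit {a : ℤ_[2]} (ha : IsUnit a) : 2 ∣ a - 1 := by
  have h_one : toZMod a = 1 := by
    have units_eq_one : ∀ u : ZMod 2, IsUnit u → u = 1 := by decide
    exact units_eq_one _ (ha.map toZMod)
  have h_mem : a - 1 ∈ RingHom.ker (toZMod (p := 2)) := by
    rw [RingHom.mem_ker, map_sub, map_one, h_one, sub_self]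
  rw [ker_toZMod, maximalIdeal_eq_span_p, Ideal.mem_span_singleton] at h_mem
  exact_mod_cast h_mem

lemma Padic.exists_eq_one_add_two_mul_of_norm_eq_one {ξ : ℚ_[2]} (hξ : ‖ξ‖ = 1) :
    ∃ w : ℚ_[2], ‖w‖ ≤ 1 ∧ ξ = 1 + 2 * w := by
  obtain ⟨b, hb⟩ := PadicInt.two_dvd_sub_one_of_isUnit
    (PadicInt.isUnit_iff (z := ⟨ξ, hξ.le⟩).mpr hξ)
  refine ⟨b, b.norm_le_one, ?_⟩
  have hb' : ξ - 1 = 2 * (b : ℚ_[2]) := congrArg ((↑) : ℤ_[2] → ℚ_[2]) hb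
  linear_combination hb'

lemma phi2_add_of_norm_le_one (y : ℚ_[2]) {z : ℚ_[2]} (hz : ‖z‖ ≤ 1) :
    phi2 (y + z) = phi2 y := by
  simp only [phi2, Set.indicator_apply, Set.mem_ofPred_eq, Pi.one_apply,
    IsUltrametricDist.norm_add_le_iff hz]

lemma psi0_add_two_mul (x : ℚ_[2]) {z : ℚ_[2]} (hz : ‖z‖ ≤ 1) :
    psi0 (x + 2 * z) = psi0 x := by
  have h₁ : (x + 2 * z) / 2 = x / 2 + z := by ring
  have h₂ : (x + 2 * z) / 2 - 1 / 2 = (x / 2 - 1 / 2) + z := by ring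
  simp only [psi0]
  rw [h₂, h₁, phi2_add_of_norm_le_one _ hz, phi2_add_of_norm_le_one _ hz]

lemma psi0_add_one (x : ℚ_[2]) : psi0 (x + 1) = -psi0 x := by
  have h₁ : (x + 1) / 2 = (x / 2 - 1 / 2) + 1 := by ring
  have h₂ : (x + 1) / 2 - 1 / 2 = x / 2 := by ring
  simp only [psi0]
  rw [h₂, h₁, phi2_add_of_norm_le_one _ (by norm_num), neg_sub]

theorem haar_wavelet_antiperiodic (ξ : ℚ_[2]) (hξ : ‖ξ‖ = 1) (x : ℚ_[2]) :
    psi0 (x + ξ) = -psi0 x := by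
  obtain ⟨w, hw, rfl⟩ := Padic.exists_eq_one_add_two_mul_of_norm_eq_one hξ
  rw [← add_assoc, psi0_add_two_mul _ hw, psi0_add_one]
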